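/- (Dimension formula) Let p be the number of su(2) blocks for ψ and let B be the union of all su(2) blocks for ψ. Then dim_ℝ K_ψ = 3p + dim_ℝ(K_ψ ∩ ḡ_B). -/
import Mathlib


open scoped Matrix

noncomputable section

/-- The `n`-qubit Hilbert space `(ℂ²)^{⊗n}`, realized as functions `(Fin n → Fin 2) → ℂ`. -/
abbrev QState (n : ℕ) := (Fin n → Fin 2) → ℂ

/-- The ambient real vector space `ℝ × (Fin n → M₂(ℂ))` containing `u(1) ⊕ su(2)^n`. -/
abbrev GV (n : ℕ) := ℝ × (Fin n → Matrix (Fin 2) (Fin 2) ℂ)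

/-- `su(2)`: traceless skew-Hermitian `2 × 2` complex matrices, as a real subspace. -/
def su2 : Submodule ℝ (Matrix (Fin 2) (Fin 2) ℂ) where
  carrier := {X | Xᴴ = -X ∧ X.trace = 0}
  add_mem' := by
    rintro X Y ⟨hX1, hX2⟩ ⟨hY1, hY2⟩
    exact ⟨by rw [Matrix.conjTranspose_add, hX1, hY1, neg_add],
           by rw [Matrix.trace_add, hX2, hY2, add_zero]⟩
  zero_mem' := ⟨by simp, by simp⟩
  smul_mem' := by
    rintro r X ⟨hX1, hX2⟩
    exact ⟨by rw [Matrix.conjTranspose_smul, hX1, star_trivial, smul_neg],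
           by rw [Matrix.trace_smul, hX2, smul_zero]⟩

/-- The Lie algebra `g = u(1) ⊕ su(2)^n` as a real subspace of `GV n`. -/
def gSub (n : ℕ) : Submodule ℝ (GV n) :=
  (⊤ : Submodule ℝ ℝ).prod (Submodule.pi Set.univ fun _ => su2)

/-- `g_S`: elements `(0, X)` of `g` with `X j = 0` for `j ∉ S`. -/
def gS {n : ℕ} (S : Set (Fin n)) : Submodule ℝ (GV n) :=
  (⊥ : Submodule ℝ ℝ).prod (Submodule.pi Set.univ fun j =>
    letI := Classical.dec (j ∈ S)
    if j ∈ S then su2 else ⊥)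

/-- `ḡ_S`: elements `(t, X)` of `g` with `X j = 0` for `j ∈ S`. -/
def gBar {n : ℕ} (S : Set (Fin n)) : Submodule ℝ (GV n) :=
  (⊤ : Submodule ℝ ℝ).prod (Submodule.pi Set.univ fun j =>
    letI := Classical.dec (j ∈ S)
    if j ∈ S then (⊥ : Submodule ℝ (Matrix (Fin 2) (Fin 2) ℂ)) else su2)

/-- The projection `P_j : g → su(2)`, `(t, X) ↦ X j`. -/
def Pj {n : ℕ} (j : Fin n) : GV n →ₗ[ℝ] Matrix (Fin 2) (Fin 2) ℂ :=
  (LinearMap.proj j).comp (LinearMap.snd ℝ ℝ (Fin n → Matrix (Fin 2) (Fin 2) ℂ))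

/-- Apply the matrix `X` to qubit `j` of the state `ψ`. -/
def applySingle {n : ℕ} (j : Fin n) (X : Matrix (Fin 2) (Fin 2) ℂ) (ψ : QState n) : QState n :=
  fun I => ∑ k : Fin 2, X (I j) k * ψ (Function.update I j k)

/-- The infinitesimal local-unitary action: `dΦ_ψ(t, X) = i t ψ + Σ_j X_j ψ`. -/
def dPhi {n : ℕ} (ψ : QState n) : GV n →ₗ[ℝ] QState n where
  toFun x := fun I => Complex.I * (x.1 : ℂ) * ψ I + ∑ j, applySingle j (x.2 j) ψ I
  map_add' x y := by
    funext I
    simp only [applySingle, Prod.fst_add, Prod.snd_add, Pi.add_apply, Matrix.add_apply,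
      Complex.ofReal_add, add_mul, Finset.sum_add_distrib]
    ring
  map_smul' r x := by
    funext I
    simp only [applySingle, Prod.smul_fst, Prod.smul_snd, Pi.smul_apply, Matrix.smul_apply,
      smul_eq_mul, Complex.real_smul, Complex.ofReal_mul, RingHom.id_apply,
      Finset.mul_sum, mul_add]
    congr 1
    · ring
    · refine Finset.sum_congr rfl fun j _ => Finset.sum_congr rfl fun k _ => by ring

/-- The stabilizer subalgebra `K_ψ = {(t,X) ∈ g : dΦ_ψ(t,X) = 0}`. -/
def stab {n : ℕ} (ψ : QState n) : Submodule ℝ (GV n) :=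
  gSub n ⊓ LinearMap.ker (dPhi ψ)

/-- The componentwise bracket on `g` (zero in the `u(1)` component). -/
def gBracket {n : ℕ} (x y : GV n) : GV n :=
  (0, fun j => ⁅x.2 j, y.2 j⁆)

/-- An `su(2)` block for `ψ`: a set `S` of qubits with `dim (K_ψ ∩ g_S) > 1` and
`dim (K_ψ ∩ g_{S'}) = 0` for every proper subset `S' ⊊ S`. -/
def Su2Block {n : ℕ} (ψ : QState n) (S : Set (Fin n)) : Prop :=
  1 < Module.finrank ℝ ↥(stab ψ ⊓ gS S) ∧
  ∀ S' : Set (Fin n), S' ⊂ S → Module.finrank ℝ ↥(stab ψ ⊓ gS S') = 0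

/-- The union `B` of all `su(2)` blocks for `ψ`. -/
def blockUnion {n : ℕ} (ψ : QState n) : Set (Fin n) :=
  {q | ∃ S : Set (Fin n), Su2Block ψ S ∧ q ∈ S}

/-- The number `p` of `su(2)` blocks for `ψ`. -/
def blockCount {n : ℕ} (ψ : QState n) : ℕ :=
  {S : Set (Fin n) | Su2Block ψ S}.ncard

/-- `ψ` factors across the set `S` of qubits: `ψ(I) = φ(I|_S) · χ(I|_{Sᶜ})`. -/
def FactorsAcross {n : ℕ} (ψ : QState n) (S : Set (Fin n)) : Prop :=
  ∃ (φ : (↥S → Fin 2) → ℂ) (χ : (↥(Sᶜ) → Fin 2) → ℂ),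
    ∀ I : Fin n → Fin 2, ψ I = φ (fun j => I j.1) * χ (fun j => I j.1)

/-- `ψ` is a nonproduct state: it factors across no proper nonempty set of qubits. -/
def IsNonproduct {n : ℕ} (ψ : QState n) : Prop :=
  ∀ S : Set (Fin n), S ≠ ∅ → S ≠ Set.univ → ¬ FactorsAcross ψ S

/-- `ψ` has a single-qubit factor. -/
def HasSingleQubitFactor {n : ℕ} (ψ : QState n) : Prop :=
  ∃ j : Fin n, FactorsAcross ψ {j}

/-- Apply the local unitary (or just local linear) transformation `⊗_j U_j` to `ψ`. -/
def luApply {n : ℕ} (U : Fin n → Matrix (Fin 2) (Fin 2) ℂ) (ψ : QState n) : QState n :=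
  fun I => ∑ J : Fin n → Fin 2, (∏ j, U j (I j) (J j)) * ψ J

/-- Local unitary equivalence of `n`-qubit states. -/
def LUEquiv {n : ℕ} (ψ ψ' : QState n) : Prop :=
  ∃ U : Fin n → Matrix (Fin 2) (Fin 2) ℂ,
    (∀ j, U j ∈ Matrix.unitaryGroup (Fin 2) ℂ) ∧ ψ' = luApply U ψ

/-- The two-qubit singlet state `φ(a,b) = δ_{a0} δ_{b1} − δ_{a1} δ_{b0}`. -/
def singletFn : Fin 2 → Fin 2 → ℂ := fun a b =>
  if a = 0 ∧ b = 1 then 1 else if a = 1 ∧ b = 0 then -1 else 0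

/-- `ψ` has a singlet factor: it is LU-equivalent to a state that factors across a
two-element set of qubits, with the two-qubit factor being the singlet. -/
def HasSingletFactor {n : ℕ} (ψ : QState n) : Prop :=
  ∃ ψ' : QState n, LUEquiv ψ ψ' ∧ ∃ j k : Fin n, j ≠ k ∧
    ∃ χ : (↥(({j, k} : Set (Fin n))ᶜ) → Fin 2) → ℂ,
      ∀ I : Fin n → Fin 2, ψ' I = singletFn (I j) (I k) * χ (fun q => I q.1)

/-- The matrix `A = diag(i, −i) ∈ su(2)`. -/
def matA : Matrix (Fin 2) (Fin 2) ℂ := !![Complex.I, 0; 0, -Complex.I]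

/-- The generalized `n`-qubit GHZ state `α|0…0⟩ + β|1…1⟩`. -/
def ghz (n : ℕ) (α β : ℂ) : QState n := fun I =>
  if ∀ j, I j = 0 then α else if ∀ j, I j = 1 then β else 0


open scoped Matrix
noncomputable section

def E0 : Matrix (Fin 2) (Fin 2) ℂ := !![Complex.I, 0; 0, -Complex.I]
def E1 : Matrix (Fin 2) (Fin 2) ℂ := !![0, 1; -1, 0]
def E2 : Matrix (Fin 2) (Fin 2) ℂ := !![0, Complex.I; Complex.I, 0]

def mop : (Fin 3 → ℝ) →ₗ[ℝ] Matrix (Fin 2) (Fin 2) ℂ :=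
  (LinearMap.proj 0).smulRight E0 + (LinearMap.proj 1).smulRight E1 +
    (LinearMap.proj 2).smulRight E2

lemma mop_apply (v : Fin 3 → ℝ) : mop v = v 0 • E0 + v 1 • E1 + v 2 • E2 := rfl

lemma mop_eq (v : Fin 3 → ℝ) :
    mop v = !![(v 0 : ℂ) * Complex.I, (v 1 : ℂ) + (v 2 : ℂ) * Complex.I;
               -(v 1 : ℂ) + (v 2 : ℂ) * Complex.I, -((v 0 : ℂ)) * Complex.I] := by
  ext i j
  fin_cases i <;> fin_cases j <;>
    simp [mop_apply, E0, E1, E2, Complex.real_smul]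

lemma E0_mem : E0 ∈ su2 := by
  constructor
  · ext i j
    fin_cases i <;> fin_cases j <;>
      simp [E0, Matrix.conjTranspose_apply]
  · simp [E0, Matrix.trace_fin_two]

lemma E1_mem : E1 ∈ su2 := by
  constructor
  · ext i j
    fin_cases i <;> fin_cases j <;>
      simp [E1, Matrix.conjTranspose_apply]
  · simp [E1, Matrix.trace_fin_two]

lemma mop_mem (v : Fin 3 → ℝ) : mop v ∈ su2 := by
  rw [mop_eq]
  constructor
  · ext i j
    fin_cases i <;> fin_cases j <;>
      simp [Matrix.conjTranspose_apply, Complex.ext_iff]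
  · simp [Matrix.trace_fin_two]

lemma mop_surj {Z : Matrix (Fin 2) (Fin 2) ℂ} (hZ : Z ∈ su2) :
    mop ![(Z 0 0).im, (Z 0 1).re, (Z 0 1).im] = Z := by
  obtain ⟨h1, h2⟩ := hZ
  have h00 : (starRingEnd ℂ) (Z 0 0) = -(Z 0 0) := by
    have := congrFun (congrFun h1 0) 0
    simpa [Matrix.conjTranspose_apply] using this
  have h01 : (starRingEnd ℂ) (Z 0 1) = -(Z 1 0) := by
    have := congrFun (congrFun h1 1) 0
    simpa [Matrix.conjTranspose_apply] using this
  have hre : (Z 0 0).re = 0 := by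
    have := congrArg Complex.re h00
    simp at this
    linarith
  have h2' : Z 0 0 + Z 1 1 = 0 := by rw [Matrix.trace_fin_two] at h2; exact h2
  have hC : (Z 1 1).re = 0 := by
    have := congrArg Complex.re h2'
    simp at this
    linarith
  have hD : (Z 1 1).im = -((Z 0 0).im) := by
    have := congrArg Complex.im h2'
    simp at this
    linarith
  have hA : (Z 1 0).re = -((Z 0 1).re) := by
    have := congrArg Complex.re h01
    simp at this
    linarith
  have hB : (Z 1 0).im = (Z 0 1).im := by
    have := congrArg Complex.im h01
    simp at this
    linarith
  rw [mop_eq]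
  ext i j
  fin_cases i <;> fin_cases j <;>
    simp [Complex.ext_iff, hre, hA, hB, hC, hD]

lemma mop_inj : Function.Injective mop := by
  rw [injective_iff_map_eq_zero]
  intro v hv
  rw [mop_eq] at hv
  have h0 := congrFun (congrFun hv 0) 0
  have h1 := congrFun (congrFun hv 0) 1
  simp [Complex.ext_iff] at h0 h1
  funext i
  fin_cases i
  · simpa using h0
  · simpa using h1.1
  · simpa using h1.2

lemma range_mop : LinearMap.range mop = su2 := by
  apply le_antisymm
  · rintro _ ⟨v, rfl⟩
    exact mop_mem v
  · intro Z hZ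
    exact ⟨_, mop_surj hZ⟩

lemma finrank_su2 : Module.finrank ℝ ↥su2 = 3 := by
  rw [← range_mop, LinearMap.finrank_range_of_inj mop_inj]
  simp

/-- cross product on ℝ³ -/
def cross3 (v w : Fin 3 → ℝ) : Fin 3 → ℝ :=
  ![v 1 * w 2 - v 2 * w 1, v 2 * w 0 - v 0 * w 2, v 0 * w 1 - v 1 * w 0]

lemma bracket_mop (v w : Fin 3 → ℝ) :
    mop v * mop w - mop w * mop v = mop (fun i => 2 * cross3 v w i) := by
  rw [mop_eq, mop_eq, mop_eq]
  ext i j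
  fin_cases i <;> fin_cases j <;>
    simp [Matrix.mul_apply, Fin.sum_univ_two, cross3, Complex.ext_iff] <;>
    (try constructor) <;> (first | ring | trivial)


open scoped Matrix
noncomputable section

lemma su2_center {Z : Matrix (Fin 2) (Fin 2) ℂ} (hZ : Z ∈ su2)
    (h : ∀ P ∈ su2, Z * P = P * Z) : Z = 0 := by
  have c0 := h E0 E0_mem
  have c1 := h E1 E1_mem
  have h01 : Z 0 1 = 0 := by
    have hc := congrFun (congrFun c0 0) 1
    simp [Matrix.mul_apply, Fin.sum_univ_two, E0] at hc
    have : Z 0 1 * Complex.I = 0 := by linear_combination -hc / 2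
    rcases mul_eq_zero.mp this with h' | h'
    · exact h'
    · exact absurd h' Complex.I_ne_zero
  have h10 : Z 1 0 = 0 := by
    have hc := congrFun (congrFun c0 1) 0
    simp [Matrix.mul_apply, Fin.sum_univ_two, E0] at hc
    have : Z 1 0 * Complex.I = 0 := by linear_combination hc / 2
    rcases mul_eq_zero.mp this with h' | h'
    · exact h'
    · exact absurd h' Complex.I_ne_zero
  have hdiag : Z 0 0 = Z 1 1 := by
    have hc := congrFun (congrFun c1 0) 1
    simpa [Matrix.mul_apply, Fin.sum_univ_two, E1] using hc
  have h2 := hZ.2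
  rw [Matrix.trace_fin_two] at h2
  have h00 : Z 0 0 = 0 := by
    have : (2 : ℂ) * Z 0 0 = 0 := by rw [hdiag] at h2 ⊢; linear_combination h2
    simpa using mul_eq_zero.mp this
  have h11 : Z 1 1 = 0 := by rw [← hdiag]; exact h00
  ext i j
  fin_cases i <;> fin_cases j <;> simp [h00, h01, h10, h11]

/-- E0 and E1 do not commute -/
lemma E0_E1_ne : E0 * E1 ≠ E1 * E0 := by
  intro h
  have hc := congrFun (congrFun h 0) 1
  simp [Matrix.mul_apply, Fin.sum_univ_two, E0, E1] at hc
  exact Complex.I_ne_zero (by linear_combination hc / 2)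

def dot3 (a b : Fin 3 → ℝ) : ℝ := a 0 * b 0 + a 1 * b 1 + a 2 * b 2

lemma dot3_cross_left (v w : Fin 3 → ℝ) : dot3 v (cross3 v w) = 0 := by
  simp [dot3, cross3]; ring

lemma dot3_cross_right (v w : Fin 3 → ℝ) : dot3 w (cross3 v w) = 0 := by
  simp [dot3, cross3]; ring

lemma dot3_self_ne {u : Fin 3 → ℝ} (hu : u ≠ 0) : dot3 u u ≠ 0 := by
  intro hEq
  apply hu
  have h : u 0 * u 0 + u 1 * u 1 + u 2 * u 2 = 0 := hEq
  have h0 : u 0 = 0 := by nlinarith [mul_self_nonneg (u 0), mul_self_nonneg (u 1), mul_self_nonneg (u 2)]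
  have h1 : u 1 = 0 := by nlinarith [mul_self_nonneg (u 0), mul_self_nonneg (u 1), mul_self_nonneg (u 2)]
  have h2 : u 2 = 0 := by nlinarith [mul_self_nonneg (u 0), mul_self_nonneg (u 1), mul_self_nonneg (u 2)]
  funext i
  fin_cases i <;> simp [h0, h1, h2]

lemma cross3_eq_zero_not_indep {v w : Fin 3 → ℝ} (h : cross3 v w = 0) :
    ¬ LinearIndependent ℝ ![v, w] := by
  intro hind
  have hv : v ≠ 0 := by
    intro h0
    exact (hind.ne_zero 0) (by simpa using h0)
  obtain ⟨i, hi⟩ : ∃ i, v i ≠ 0 := by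
    by_contra hcon
    push_neg at hcon
    exact hv (funext hcon)
  have h0 := congrFun h 0
  have h1 := congrFun h 1
  have h2 := congrFun h 2
  simp [cross3] at h0 h1 h2
  have hminor : ∀ a b : Fin 3, v a * w b = v b * w a := by
    intro a b
    fin_cases a <;> fin_cases b <;> (try simp) <;>
      first
        | rfl
        | linear_combination h0 | linear_combination -h0
        | linear_combination h1 | linear_combination -h1
        | linear_combination h2 | linear_combination -h2
  have hrel : w i • v + (-(v i)) • w = 0 := by
    funext j
    show w i * v j + (-(v i)) * w j = 0
    linear_combination hminor j i
  have := (Fintype.linearIndependent_iff.mp hind) ![w i, -(v i)] ?_ 1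
  · simp at this
    exact hi this
  · rw [Fin.sum_univ_two]
    simpa using hrel

lemma indep_triple {v w : Fin 3 → ℝ} (hind : LinearIndependent ℝ ![v, w]) :
    LinearIndependent ℝ ![v, w, cross3 v w] := by
  have hc : cross3 v w ≠ 0 := by
    intro h
    exact cross3_eq_zero_not_indep h hind
  rw [Fintype.linearIndependent_iff]
  intro g hg
  have hsum : g 0 • v + g 1 • w + g 2 • cross3 v w = 0 := by
    rw [Fin.sum_univ_three] at hg
    simpa using hg
  -- dot with cross3 v w
  have hdot : ∀ j, (g 0 • v + g 1 • w + g 2 • cross3 v w) j = 0 := fun j => by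
    rw [hsum]; rfl
  have hg2 : g 2 = 0 := by
    have e : g 0 * dot3 v (cross3 v w) + g 1 * dot3 w (cross3 v w)
        + g 2 * dot3 (cross3 v w) (cross3 v w) = 0 := by
      have e0 := hdot 0
      have e1 := hdot 1
      have e2 := hdot 2
      simp only [Pi.add_apply, Pi.smul_apply, smul_eq_mul] at e0 e1 e2
      simp only [dot3]
      linear_combination (cross3 v w 0) * e0 + (cross3 v w 1) * e1 + (cross3 v w 2) * e2
    rw [dot3_cross_left, dot3_cross_right] at e
    simp at e
    rcases e with e | e
    · exact e
    · exact absurd e (dot3_self_ne hc)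
  have hpair : g 0 • v + g 1 • w = 0 := by
    rw [hg2] at hsum
    simpa using hsum
  have := Fintype.linearIndependent_iff.mp hind ![g 0, g 1] ?_
  · intro i
    fin_cases i
    · simpa using this 0
    · simpa using this 1
    · exact hg2
  · rw [Fin.sum_univ_two]
    simpa using hpair

/-- any bracket-closed subspace of su2 of dimension ≥ 2 is all of su2 -/
lemma su2_sub_full (W : Submodule ℝ (Matrix (Fin 2) (Fin 2) ℂ)) (hW : W ≤ su2)
    (hbr : ∀ a ∈ W, ∀ b ∈ W, a * b - b * a ∈ W)
    (h2 : 2 ≤ Module.finrank ℝ ↥W) : W = su2 := by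
  obtain ⟨f, hf⟩ := exists_linearIndependent_of_le_finrank h2
  obtain ⟨v, hv⟩ : ∃ v, mop v = (f 0 : Matrix (Fin 2) (Fin 2) ℂ) := by
    have := hW (f 0).2
    exact ⟨_, mop_surj this⟩
  obtain ⟨w, hw⟩ : ∃ w, mop w = (f 1 : Matrix (Fin 2) (Fin 2) ℂ) := by
    have := hW (f 1).2
    exact ⟨_, mop_surj this⟩
  have hcomp : (W.subtype ∘ f) = mop ∘ ![v, w] := by
    funext i
    fin_cases i <;> simp [hv, hw]
  have hindM : LinearIndependent ℝ (W.subtype ∘ f) :=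
    hf.map' W.subtype (Submodule.ker_subtype W)
  have hindvw : LinearIndependent ℝ ![v, w] := by
    apply LinearIndependent.of_comp mop
    rw [← hcomp]
    exact hindM
  have htriple := (indep_triple hindvw).map' mop (LinearMap.ker_eq_bot.mpr mop_inj)
  -- all three images are in W
  have hmv : mop v ∈ W := hv ▸ (f 0).2
  have hmw : mop w ∈ W := hw ▸ (f 1).2
  have hmc : mop (cross3 v w) ∈ W := by
    have hb := hbr _ hmv _ hmw
    rw [bracket_mop] at hb
    have he : (fun i => 2 * cross3 v w i) = (2 : ℝ) • cross3 v w := by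
      funext i
      simp
    rw [he, map_smul] at hb
    have := W.smul_mem (2 : ℝ)⁻¹ hb
    rwa [smul_smul, inv_mul_cancel₀ (by norm_num), one_smul] at this
  -- package as independent family in W
  set gfam : Fin 3 → ↥W :=
    ![⟨mop v, hmv⟩, ⟨mop w, hmw⟩, ⟨mop (cross3 v w), hmc⟩] with hgfam
  have hgcomp : W.subtype ∘ gfam = mop ∘ ![v, w, cross3 v w] := by
    funext i
    fin_cases i <;> simp [hgfam]
  have hfam : LinearIndependent ℝ gfam := by
    apply LinearIndependent.of_comp W.subtype
    rw [hgcomp]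
    exact htriple
  have h3 : 3 ≤ Module.finrank ℝ ↥W := by
    simpa using hfam.fintype_card_le_finrank
  apply Submodule.eq_of_le_of_finrank_le hW
  rw [finrank_su2]
  exact h3


open scoped Matrix
noncomputable section

lemma su2_bracket_mem {X Y : Matrix (Fin 2) (Fin 2) ℂ} (hX : X ∈ su2) (hY : Y ∈ su2) :
    X * Y - Y * X ∈ su2 := by
  obtain ⟨hX1, hX2⟩ := hX
  obtain ⟨hY1, hY2⟩ := hY
  constructor
  · rw [Matrix.conjTranspose_sub, Matrix.conjTranspose_mul, Matrix.conjTranspose_mul,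
      hX1, hY1]
    simp [mul_comm]
  · rw [Matrix.trace_sub, Matrix.trace_mul_comm]
    ring

lemma mem_gSub {n : ℕ} {x : GV n} : x ∈ gSub n ↔ ∀ j, x.2 j ∈ su2 := by
  unfold gSub
  rw [Submodule.mem_prod, Submodule.mem_pi]
  simp

lemma mem_gS {n : ℕ} {S : Set (Fin n)} {x : GV n} :
    x ∈ gS S ↔ x.1 = 0 ∧ (∀ j ∈ S, x.2 j ∈ su2) ∧ ∀ j ∉ S, x.2 j = 0 := by
  unfold gS
  rw [Submodule.mem_prod, Submodule.mem_pi]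
  simp only [Submodule.mem_bot, Set.mem_univ, forall_true_left]
  constructor
  · rintro ⟨h1, h2⟩
    refine ⟨h1, fun j hj => ?_, fun j hj => ?_⟩
    · have := h2 j
      rwa [if_pos hj] at this
    · have := h2 j
      rwa [if_neg hj, Submodule.mem_bot] at this
  · rintro ⟨h1, h2, h3⟩
    refine ⟨h1, fun j => ?_⟩
    by_cases hj : j ∈ S
    · rw [if_pos hj]
      exact h2 j hj
    · rw [if_neg hj, Submodule.mem_bot]
      exact h3 j hj

lemma mem_gBar {n : ℕ} {S : Set (Fin n)} {x : GV n} :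
    x ∈ gBar S ↔ (∀ j ∈ S, x.2 j = 0) ∧ ∀ j ∉ S, x.2 j ∈ su2 := by
  unfold gBar
  rw [Submodule.mem_prod, Submodule.mem_pi]
  simp only [Submodule.mem_top, Set.mem_univ, forall_true_left, true_and]
  constructor
  · rintro h2
    refine ⟨fun j hj => ?_, fun j hj => ?_⟩
    · have := h2 j
      rwa [if_pos hj, Submodule.mem_bot] at this
    · have := h2 j
      rwa [if_neg hj] at this
  · rintro ⟨h2, h3⟩ j
    by_cases hj : j ∈ S
    · rw [if_pos hj, Submodule.mem_bot]
      exact h2 j hj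
    · rw [if_neg hj]
      exact h3 j hj

/-- operator form of the action -/
def Lop {n : ℕ} (x : GV n) (φ : QState n) : QState n :=
  fun I => Complex.I * (x.1 : ℂ) * φ I + ∑ j, applySingle j (x.2 j) φ I

lemma dPhi_eq_Lop {n : ℕ} (ψ : QState n) (x : GV n) : dPhi ψ x = Lop x ψ := rfl

lemma applySingle_same {n : ℕ} (j : Fin n) (X Y : Matrix (Fin 2) (Fin 2) ℂ) (φ : QState n) :
    applySingle j X (applySingle j Y φ) = applySingle j (X * Y) φ := by
  funext I
  unfold applySingle
  simp only [Function.update_self, Function.update_idem, Finset.mul_sum, Matrix.mul_apply,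
    Finset.sum_mul]
  rw [Finset.sum_comm]
  refine Finset.sum_congr rfl fun l _ => Finset.sum_congr rfl fun k _ => by ring

lemma applySingle_comm {n : ℕ} {j m : Fin n} (hjm : j ≠ m)
    (X Y : Matrix (Fin 2) (Fin 2) ℂ) (φ : QState n) :
    applySingle j X (applySingle m Y φ) = applySingle m Y (applySingle j X φ) := by
  funext I
  unfold applySingle
  simp only [Finset.mul_sum]
  rw [Finset.sum_comm]
  refine Finset.sum_congr rfl fun l _ => Finset.sum_congr rfl fun k _ => ?_
  rw [Function.update_of_ne (Ne.symm hjm), Function.update_of_ne hjm,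
    Function.update_comm hjm]
  ring

lemma applySingle_subX {n : ℕ} (j : Fin n) (X Y : Matrix (Fin 2) (Fin 2) ℂ) (φ : QState n)
    (I : Fin n → Fin 2) :
    applySingle j (X - Y) φ I = applySingle j X φ I - applySingle j Y φ I := by
  unfold applySingle
  rw [← Finset.sum_sub_distrib]
  refine Finset.sum_congr rfl fun k _ => ?_
  rw [Matrix.sub_apply]
  ring

lemma applySingle_zero {n : ℕ} (j : Fin n) (X : Matrix (Fin 2) (Fin 2) ℂ) :
    applySingle j X (0 : QState n) = 0 := by
  funext I
  simp [applySingle]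

lemma applySingle_Lop {n : ℕ} (j : Fin n) (X : Matrix (Fin 2) (Fin 2) ℂ) (y : GV n)
    (φ : QState n) :
    applySingle j X (Lop y φ) = fun I => Complex.I * (y.1 : ℂ) * applySingle j X φ I +
      ∑ m, applySingle j X (applySingle m (y.2 m) φ) I := by
  funext I
  unfold applySingle Lop
  simp only [mul_add, Finset.sum_add_distrib, Finset.mul_sum]
  congr 1
  · refine Finset.sum_congr rfl fun k _ => by ring
  · rw [Finset.sum_comm]
    apply Finset.sum_congr rfl
    intro m _
    apply Finset.sum_congr rfl
    intro k _
    unfold applySingle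
    rw [Finset.mul_sum]


open scoped Matrix
noncomputable section

lemma sum_swap_cancel {n : ℕ} (f g : Fin n → Fin n → ℂ)
    (h : ∀ j m, j ≠ m → g j m = f m j) :
    (∑ j, ∑ m, f j m) - (∑ j, ∑ m, g j m) = ∑ j, (f j j - g j j) := by
  have hg : (∑ j, ∑ m, g j m) = ∑ j, ∑ m, (if m = j then g j j else f j m) := by
    rw [Finset.sum_comm]
    apply Finset.sum_congr rfl
    intro j _
    apply Finset.sum_congr rfl
    intro m _
    by_cases hmj : m = j
    · subst hmj
      simp
    · rw [if_neg hmj]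
      exact h m j hmj
  rw [hg, ← Finset.sum_sub_distrib]
  apply Finset.sum_congr rfl
  intro j _
  rw [← Finset.sum_sub_distrib]
  have he : ∀ m : Fin n, f j m - (if m = j then g j j else f j m) =
      if m = j then (f j j - g j j) else 0 := by
    intro m
    by_cases hmj : m = j
    · subst hmj
      simp
    · simp [hmj]
  rw [Finset.sum_congr rfl fun m _ => he m, Finset.sum_ite_eq' Finset.univ j]
  simp

lemma Lop_bracket {n : ℕ} (x y : GV n) (φ : QState n) (I : Fin n → Fin 2) :
    Lop x (Lop y φ) I - Lop y (Lop x φ) I = Lop (gBracket x y) φ I := by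
  have hx := applySingle_Lop (y := y) (φ := φ)
  show (Complex.I * (x.1 : ℂ) * (Lop y φ) I + ∑ j, applySingle j (x.2 j) (Lop y φ) I)
      - (Complex.I * (y.1 : ℂ) * (Lop x φ) I + ∑ j, applySingle j (y.2 j) (Lop x φ) I)
      = Lop (gBracket x y) φ I
  have e1 : ∀ j, applySingle j (x.2 j) (Lop y φ) I = Complex.I * (y.1 : ℂ) *
      applySingle j (x.2 j) φ I + ∑ m, applySingle j (x.2 j) (applySingle m (y.2 m) φ) I := by
    intro j
    rw [applySingle_Lop]
  have e2 : ∀ j, applySingle j (y.2 j) (Lop x φ) I = Complex.I * (x.1 : ℂ) *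
      applySingle j (y.2 j) φ I + ∑ m, applySingle j (y.2 j) (applySingle m (x.2 m) φ) I := by
    intro j
    rw [applySingle_Lop]
  simp only [Finset.sum_congr rfl fun j _ => e1 j, Finset.sum_congr rfl fun j _ => e2 j,
    Finset.sum_add_distrib]
  show _ = Complex.I * ((0 : ℝ) : ℂ) * φ I + ∑ j, applySingle j ⁅x.2 j, y.2 j⁆ φ I
  have key : (∑ j, ∑ m, applySingle j (x.2 j) (applySingle m (y.2 m) φ) I)
      - (∑ j, ∑ m, applySingle j (y.2 j) (applySingle m (x.2 m) φ) I)
      = ∑ j, applySingle j ⁅x.2 j, y.2 j⁆ φ I := by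
    rw [sum_swap_cancel _ _ (fun j m hjm => by rw [applySingle_comm hjm])]
    apply Finset.sum_congr rfl
    intro j _
    rw [applySingle_same, applySingle_same, Ring.lie_def, applySingle_subX]
  have hLy : Lop y φ I = Complex.I * (y.1 : ℂ) * φ I + ∑ j, applySingle j (y.2 j) φ I := rfl
  have hLx : Lop x φ I = Complex.I * (x.1 : ℂ) * φ I + ∑ j, applySingle j (x.2 j) φ I := rfl
  rw [hLy, hLx]
  simp only [← Finset.mul_sum]
  push_cast
  linear_combination key

lemma gBracket_mem_stab {n : ℕ} {ψ : QState n} {x y : GV n}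
    (hx : x ∈ stab ψ) (hy : y ∈ stab ψ) : gBracket x y ∈ stab ψ := by
  unfold stab at hx hy ⊢
  rw [Submodule.mem_inf] at hx hy ⊢
  obtain ⟨hx1, hx2⟩ := hx
  obtain ⟨hy1, hy2⟩ := hy
  constructor
  · rw [mem_gSub]
    intro j
    have := su2_bracket_mem (mem_gSub.mp hx1 j) (mem_gSub.mp hy1 j)
    rw [gBracket]
    simpa [Ring.lie_def] using this
  · rw [LinearMap.mem_ker] at hx2 hy2 ⊢
    rw [dPhi_eq_Lop] at hx2 hy2 ⊢
    funext I
    have hz : Lop x (Lop y ψ) I - Lop y (Lop x ψ) I = 0 := by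
      rw [hx2, hy2]
      show (Complex.I * (x.1 : ℂ) * (0 : QState n) I + ∑ j, applySingle j (x.2 j) (0 : QState n) I)
        - (Complex.I * (y.1 : ℂ) * (0 : QState n) I + ∑ j, applySingle j (y.2 j) (0 : QState n) I) = 0
      simp [applySingle_zero]
    rw [← Lop_bracket, hz]
    rfl


open scoped Matrix
open Module
noncomputable section

section blocks
variable {n : ℕ} {ψ : QState n}

lemma stab_le_gSub {x : GV n} (hx : x ∈ stab ψ) : x ∈ gSub n := by
  unfold stab at hx
  exact (Submodule.mem_inf.mp hx).1

lemma gS_empty : gS (∅ : Set (Fin n)) = ⊥ := by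
  apply le_antisymm
  · intro x hx
    rw [mem_gS] at hx
    rw [Submodule.mem_bot]
    obtain ⟨h1, _, h3⟩ := hx
    have : x.2 = 0 := funext fun j => h3 j (by simp)
    exact Prod.ext h1 this
  · exact bot_le

lemma block_nonempty {S : Set (Fin n)} (hS : Su2Block ψ S) : S.Nonempty := by
  rcases Set.eq_empty_or_nonempty S with h | h
  · exfalso
    have := hS.1
    rw [h, gS_empty, inf_bot_eq, finrank_bot] at this
    omega
  · exact h

lemma stab_inf_gS_eq_bot {S : Set (Fin n)} (h : finrank ℝ ↥(stab ψ ⊓ gS S) = 0) :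
    stab ψ ⊓ gS S = ⊥ :=
  Submodule.finrank_eq_zero.mp h

/-- injectivity of P_j on K ∩ g_S for a block S -/
lemma block_inj {S : Set (Fin n)} (hS : Su2Block ψ S) {j : Fin n} (hj : j ∈ S)
    {x : GV n} (hx : x ∈ stab ψ ⊓ gS S) (h0 : x.2 j = 0) : x = 0 := by
  obtain ⟨hx1, hx2⟩ := Submodule.mem_inf.mp hx
  rw [mem_gS] at hx2
  have hmem : x ∈ stab ψ ⊓ gS (S \ {j}) := by
    rw [Submodule.mem_inf, mem_gS]
    refine ⟨hx1, hx2.1, fun k hk => hx2.2.1 k hk.1, fun k hk => ?_⟩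
    by_cases hkS : k ∈ S
    · have : k = j := by
        by_contra hne
        exact hk ⟨hkS, hne⟩
      rw [this]
      exact h0
    · exact hx2.2.2 k hkS
  have hss : S \ {j} ⊂ S := Set.sdiff_singleton_ssubset.mpr hj
  have := stab_inf_gS_eq_bot (ψ := ψ) (hS.2 _ hss)
  rw [this, Submodule.mem_bot] at hmem
  exact hmem

lemma gBracket_mem_gS {S : Set (Fin n)} {x y : GV n}
    (hx : x ∈ gSub n) (hy : y ∈ gSub n) (h0 : ∀ k ∉ S, x.2 k = 0 ∨ y.2 k = 0) :
    gBracket x y ∈ gS S := by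
  rw [mem_gS]
  refine ⟨rfl, fun k _ => ?_, fun k hk => ?_⟩
  · show ⁅x.2 k, y.2 k⁆ ∈ su2
    rw [Ring.lie_def]
    exact su2_bracket_mem (mem_gSub.mp hx k) (mem_gSub.mp hy k)
  · show ⁅x.2 k, y.2 k⁆ = 0
    rcases h0 k hk with h | h <;> rw [Ring.lie_def, h] <;> simp

/-- the image of K ∩ g_S under P_j is all of su2, and dim (K ∩ g_S) = 3 -/
lemma block_map_Pj {S : Set (Fin n)} (hS : Su2Block ψ S) {j : Fin n} (hj : j ∈ S) :
    Submodule.map (Pj j) (stab ψ ⊓ gS S) = su2 ∧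
      finrank ℝ ↥(stab ψ ⊓ gS S) = 3 := by
  set M := stab ψ ⊓ gS S with hM
  set f : ↥M →ₗ[ℝ] Matrix (Fin 2) (Fin 2) ℂ := (Pj j).comp M.subtype with hf
  have hinj : Function.Injective f := by
    rw [← LinearMap.ker_eq_bot]
    apply (Submodule.eq_bot_iff _).mpr
    intro x hxk
    have hx0 : (x : GV n).2 j = 0 := hxk
    have : (x : GV n) = 0 := block_inj hS hj x.2 hx0
    exact Subtype.ext this
  have hrange : LinearMap.range f = Submodule.map (Pj j) M := by
    rw [hf, LinearMap.range_comp, Submodule.range_subtype]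
  have hfr : finrank ℝ ↥(Submodule.map (Pj j) M) = finrank ℝ ↥M := by
    rw [← hrange, LinearMap.finrank_range_of_inj hinj]
  have hle : Submodule.map (Pj j) M ≤ su2 := by
    rintro _ ⟨x, hx, rfl⟩
    obtain ⟨hx1, hx2⟩ := Submodule.mem_inf.mp hx
    exact (mem_gS.mp hx2).2.1 j hj
  have hbr : ∀ a ∈ Submodule.map (Pj j) M, ∀ b ∈ Submodule.map (Pj j) M,
      a * b - b * a ∈ Submodule.map (Pj j) M := by
    rintro _ ⟨x, hx, rfl⟩ _ ⟨y, hy, rfl⟩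
    refine ⟨gBracket x y, ?_, ?_⟩
    · obtain ⟨hx1, hx2⟩ := Submodule.mem_inf.mp hx
      obtain ⟨hy1, hy2⟩ := Submodule.mem_inf.mp hy
      refine Submodule.mem_inf.mpr ⟨gBracket_mem_stab hx1 hy1, ?_⟩
      refine gBracket_mem_gS (stab_le_gSub hx1) (stab_le_gSub hy1) fun k hk => ?_
      exact Or.inl ((mem_gS.mp hx2).2.2 k hk)
    · show (gBracket x y).2 j = _
      show ⁅x.2 j, y.2 j⁆ = Pj j x * Pj j y - Pj j y * Pj j x
      rw [Ring.lie_def]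
      rfl
  have h2 : 2 ≤ finrank ℝ ↥(Submodule.map (Pj j) M) := by
    rw [hfr]
    exact hS.1
  have hfull := su2_sub_full _ hle hbr h2
  refine ⟨hfull, ?_⟩
  rw [← hfr, hfull, finrank_su2]
end blocks


open scoped Matrix
open Module
noncomputable section

section blocks2
variable {n : ℕ} {ψ : QState n}

lemma blocks_disjoint {S S' : Set (Fin n)} (hS : Su2Block ψ S) (hS' : Su2Block ψ S')
    (hne : S ≠ S') {j : Fin n} (hjS : j ∈ S) (hjS' : j ∈ S') : False := by
  have hssub : S ∩ S' ⊂ S := by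
    refine ⟨Set.inter_subset_left, fun hsub => ?_⟩
    have hSS' : S ⊆ S' := fun k hk => (hsub hk).2
    have : S ⊂ S' := ⟨hSS', fun h => hne (le_antisymm hSS' h)⟩
    have h0 := hS'.2 S this
    have h1 := hS.1
    omega
  have hbot := stab_inf_gS_eq_bot (ψ := ψ) (hS.2 _ hssub)
  have hcomm : ∀ a ∈ su2, ∀ b ∈ su2, a * b = b * a := by
    intro a ha b hb
    rw [← (block_map_Pj hS hjS).1] at ha
    rw [← (block_map_Pj hS' hjS').1] at hb
    obtain ⟨x, hx, rfl⟩ := ha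
    obtain ⟨y, hy, rfl⟩ := hb
    obtain ⟨hx1, hx2⟩ := Submodule.mem_inf.mp hx
    obtain ⟨hy1, hy2⟩ := Submodule.mem_inf.mp hy
    have hz : gBracket x y ∈ stab ψ ⊓ gS (S ∩ S') := by
      refine Submodule.mem_inf.mpr ⟨gBracket_mem_stab hx1 hy1, ?_⟩
      refine gBracket_mem_gS (stab_le_gSub hx1) (stab_le_gSub hy1) fun k hk => ?_
      by_cases hkS : k ∈ S
      · exact Or.inr ((mem_gS.mp hy2).2.2 k fun hk' => hk ⟨hkS, hk'⟩)
      · exact Or.inl ((mem_gS.mp hx2).2.2 k hkS)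
    rw [hbot, Submodule.mem_bot] at hz
    have : (gBracket x y).2 j = 0 := by rw [hz]; rfl
    have hb0 : ⁅x.2 j, y.2 j⁆ = 0 := this
    rw [Ring.lie_def, sub_eq_zero] at hb0
    exact hb0
  exact E0_E1_ne (hcomm E0 E0_mem E1 E1_mem)

/-- commutant argument: if x ∈ K vanishes at one site of a block S, it vanishes on S -/
lemma stab_comp_zero {S : Set (Fin n)} (hS : Su2Block ψ S) {x : GV n}
    (hx : x ∈ stab ψ) {j : Fin n} (hj : j ∈ S) (h0 : x.2 j = 0)
    {k : Fin n} (hk : k ∈ S) : x.2 k = 0 := by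
  have hzero : ∀ y ∈ stab ψ ⊓ gS S, ∀ m : Fin n, ⁅y.2 m, x.2 m⁆ = 0 := by
    intro y hy m
    obtain ⟨hy1, hy2⟩ := Submodule.mem_inf.mp hy
    have hz : gBracket y x ∈ stab ψ ⊓ gS S := by
      refine Submodule.mem_inf.mpr ⟨gBracket_mem_stab hy1 hx, ?_⟩
      refine gBracket_mem_gS (stab_le_gSub hy1) (stab_le_gSub hx) fun m' hm' => ?_
      exact Or.inl ((mem_gS.mp hy2).2.2 m' hm')
    have hzj : (gBracket y x).2 j = 0 := by
      show ⁅y.2 j, x.2 j⁆ = 0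
      rw [h0, Ring.lie_def]
      simp
    have hzz := block_inj hS hj hz hzj
    have : (gBracket y x).2 m = 0 := by rw [hzz]; rfl
    exact this
  apply su2_center (mem_gSub.mp (stab_le_gSub hx) k)
  intro P hP
  rw [← (block_map_Pj hS hk).1] at hP
  obtain ⟨y, hy, rfl⟩ := hP
  have := hzero y hy k
  rw [Ring.lie_def, sub_eq_zero] at this
  exact this.symm

end blocks2


open scoped Matrix
open Module
noncomputable section

/-- Dimension formula: `dim K_ψ = 3p + dim (K_ψ ∩ ḡ_B)`, where `p` is the
number of `su(2)` blocks for `ψ` and `B` is the union of all `su(2)` blocks for `ψ`. -/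
theorem stmt5 {n : ℕ} (hn : 1 ≤ n) (ψ : QState n) (hψ : ψ ≠ 0) :
    Module.finrank ℝ ↥(stab ψ) =
      3 * blockCount ψ + Module.finrank ℝ ↥(stab ψ ⊓ gBar (blockUnion ψ)) := by
  classical
  have hfin : ({S : Set (Fin n) | Su2Block ψ S}).Finite := Set.toFinite _
  set 𝓕 := hfin.toFinset with h𝓕
  have hmem𝓕 : ∀ {S : Set (Fin n)}, S ∈ 𝓕 ↔ Su2Block ψ S := fun {S} => hfin.mem_toFinset
  have hrep : ∀ S : ↥𝓕, ∃ j, j ∈ (S : Set (Fin n)) := fun S => block_nonempty (hmem𝓕.mp S.2)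
  choose rep hrepmem using hrep
  set Fm : ↥(stab ψ) →ₗ[ℝ] (↥𝓕 → ↥su2) :=
    { toFun := fun x S => ⟨(x : GV n).2 (rep S), mem_gSub.mp (stab_le_gSub x.2) (rep S)⟩
      map_add' := fun a b => rfl
      map_smul' := fun r a => rfl } with hFm
  have hker : LinearMap.ker Fm = Submodule.comap (stab ψ).subtype
      (stab ψ ⊓ gBar (blockUnion ψ)) := by
    ext x
    simp only [LinearMap.mem_ker, Submodule.mem_comap, Submodule.mem_inf]
    constructor
    · intro h
      refine ⟨x.2, ?_⟩
      rw [mem_gBar]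
      constructor
      · intro j hj
        obtain ⟨S0, hS0, hjS0⟩ := hj
        have hS0f : S0 ∈ 𝓕 := hmem𝓕.mpr hS0
        have h0 : (x : GV n).2 (rep ⟨S0, hS0f⟩) = 0 := by
          have h1 := congrFun h ⟨S0, hS0f⟩
          exact congrArg Subtype.val h1
        exact stab_comp_zero hS0 x.2 (hrepmem ⟨S0, hS0f⟩) h0 hjS0
      · intro j _
        exact mem_gSub.mp (stab_le_gSub x.2) j
    · intro h
      funext S
      apply Subtype.ext
      show (x : GV n).2 (rep S) = 0
      have hj : rep S ∈ blockUnion ψ := ⟨S, hmem𝓕.mp S.2, hrepmem S⟩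
      exact (mem_gBar.mp h.2).1 _ hj
  have hrange : LinearMap.range Fm = ⊤ := by
    rw [LinearMap.range_eq_top]
    intro f
    have hy : ∀ S : ↥𝓕, ∃ y : GV n, (y ∈ stab ψ ⊓ gS (S : Set (Fin n))) ∧
        y.2 (rep S) = (f S : Matrix (Fin 2) (Fin 2) ℂ) := by
      intro S
      have hb := (block_map_Pj (hmem𝓕.mp S.2) (hrepmem S)).1
      have hmem : ((f S : Matrix (Fin 2) (Fin 2) ℂ)) ∈
          Submodule.map (Pj (rep S)) (stab ψ ⊓ gS (S : Set (Fin n))) := by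
        rw [hb]
        exact (f S).2
      obtain ⟨y, hy', hy2'⟩ := hmem
      exact ⟨y, hy', hy2'⟩
    choose y hy1 hy2 using hy
    have hsum_mem : (∑ S : ↥𝓕, y S) ∈ stab ψ :=
      Submodule.sum_mem _ fun S _ => (Submodule.mem_inf.mp (hy1 S)).1
    refine ⟨⟨∑ S : ↥𝓕, y S, hsum_mem⟩, ?_⟩
    funext S
    apply Subtype.ext
    show ((∑ S' : ↥𝓕, y S') : GV n).2 (rep S) = (f S : Matrix (Fin 2) (Fin 2) ℂ)
    have hmap : ((∑ S' : ↥𝓕, y S') : GV n).2 (rep S) = ∑ S' : ↥𝓕, (y S').2 (rep S) :=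
      map_sum (Pj (rep S)) y Finset.univ
    rw [hmap, Finset.sum_eq_single S]
    · exact hy2 S
    · intro S' _ hne
      have hdisj : rep S ∉ (S' : Set (Fin n)) := by
        intro hmem
        exact blocks_disjoint (hmem𝓕.mp S'.2) (hmem𝓕.mp S.2)
          (fun h => hne (Subtype.ext h)) hmem (hrepmem S)
      exact (mem_gS.mp (Submodule.mem_inf.mp (hy1 S')).2).2.2 _ hdisj
    · intro hS
      exact absurd (Finset.mem_univ S) hS
  have hcount : Fintype.card ↥𝓕 = blockCount ψ := by
    rw [blockCount, Set.ncard_eq_toFinset_card _ hfin]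
    exact Fintype.card_coe 𝓕
  have hrank := LinearMap.finrank_range_add_finrank_ker Fm
  rw [hrange, finrank_top] at hrank
  have hpi : finrank ℝ (↥𝓕 → ↥su2) = Fintype.card ↥𝓕 * 3 := by
    rw [Module.finrank_pi_fintype]
    simp [finrank_su2]
  have hkerrank : finrank ℝ ↥(LinearMap.ker Fm) =
      finrank ℝ ↥(stab ψ ⊓ gBar (blockUnion ψ)) := by
    rw [hker]
    exact (Submodule.comapSubtypeEquivOfLe inf_le_left).finrank_eq
  rw [hpi, hcount, hkerrank] at hrank
  omega
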